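/- arXiv:1207.4514 — 3 statements merged into one kernel-verified Lean document; each statement's English description precedes it below -/
import Mathlib

section
/- Let E be a Banach space and B a nonempty bounded subset of the dual space E* with Chebyshev radius r_B. Then the Chebyshev center C_B = {x ∈ E* : sup_{b∈B} ‖x − b‖ ≤ r_B} = ∩_{r > r_B} C_r is nonempty, convex, and compact in the weak* topology of E*, where C_r = {x ∈ E* : sup_{b∈B} ‖x − b‖ ≤ r}. -/
/-!
Each `C_r = ⋂ b ∈ B, closedBall b r` is convex and weak*-closed, since dual balls are
weak*-closed; as `B` is nonempty it lies in one dual ball, hence is weak*-compact by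
Banach–Alaoglu. The sets `C_r` with `r > r_B` are nonempty and decrease as `r ↓ r_B`, so their
intersection, which is `C_B`, is nonempty by the finite intersection property.
-/

open NormedSpace Set

noncomputable def chebyshevRadius {Y : Type} [NormedAddCommGroup Y] (B : Set Y) : ℝ :=
  sInf {r : ℝ | 0 ≤ r ∧ ∃ x : Y, ∀ b ∈ B, ‖x - b‖ ≤ r}

noncomputable def chebyshevCenter {Y : Type} [NormedAddCommGroup Y] (B : Set Y) : Set Y :=
  {x : Y | ∀ b ∈ B, ‖x - b‖ ≤ chebyshevRadius B}

open Metric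

def chebyshevBall {Y : Type} [NormedAddCommGroup Y] (B : Set Y) (r : ℝ) : Set Y :=
  {x : Y | ∀ b ∈ B, ‖x - b‖ ≤ r}

section NormedGroup

variable {Y : Type} [NormedAddCommGroup Y] {B : Set Y}

theorem chebyshevBall_eq_biInter_closedBall (r : ℝ) :
    chebyshevBall B r = ⋂ b ∈ B, closedBall b r := by
  ext x
  simp [chebyshevBall, dist_eq_norm]

theorem chebyshevBall_mono : Monotone (chebyshevBall B) :=
  fun _ _ hrs _ hx b hb => (hx b hb).trans hrs

theorem chebyshevBall_nonempty_of_chebyshevRadius_lt (hB : Bornology.IsBounded B) {r : ℝ}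
    (hr : chebyshevRadius B < r) : (chebyshevBall B r).Nonempty := by
  obtain ⟨R, hR⟩ := (isBounded_iff_subset_closedBall 0).1 hB
  have hS : {r : ℝ | 0 ≤ r ∧ ∃ x : Y, ∀ b ∈ B, ‖x - b‖ ≤ r}.Nonempty :=
    ⟨max R 0, le_max_right _ _, 0, fun b hb => by
      simpa using (mem_closedBall_zero_iff.1 (hR hb)).trans (le_max_left R 0)⟩
  obtain ⟨s, ⟨-, x, hx⟩, hsr⟩ := exists_lt_of_csInf_lt hS hr
  exact ⟨x, fun b hb => (hx b hb).trans hsr.le⟩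

theorem chebyshevCenter_eq_iInter_chebyshevBall :
    chebyshevCenter B = ⋂ r : Ioi (chebyshevRadius B), chebyshevBall B r := by
  ext x
  simp only [chebyshevCenter, chebyshevBall, iInter_subtype, mem_iInter, mem_Ioi]
  exact ⟨fun hx r hr b hb => (hx b hb).trans hr.le,
    fun hx b hb => le_of_forall_gt_imp_ge_of_dense fun r hr => hx r hr b hb⟩

end NormedGroup

theorem convex_chebyshevBall {Y : Type} [NormedAddCommGroup Y] [NormedSpace ℝ Y] (B : Set Y)
    (r : ℝ) : Convex ℝ (chebyshevBall B r) := by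
  rw [chebyshevBall_eq_biInter_closedBall]
  exact convex_iInter₂ fun b _ => convex_closedBall b r

section WeakDual

variable {𝕜 E : Type} [NontriviallyNormedField 𝕜] [NormedAddCommGroup E] [NormedSpace 𝕜 E]
  {B : Set (StrongDual 𝕜 E)}

theorem image_toWeakDual_chebyshevBall (r : ℝ) :
    StrongDual.toWeakDual '' chebyshevBall B r =
      ⋂ b ∈ B, WeakDual.toStrongDual ⁻¹' closedBall b r := by
  rw [chebyshevBall_eq_biInter_closedBall, LinearEquiv.image_eq_preimage_symm, preimage_iInter₂]
  rfl

theorem isClosed_image_toWeakDual_chebyshevBall (r : ℝ) :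
    IsClosed (StrongDual.toWeakDual '' chebyshevBall B r) := by
  rw [image_toWeakDual_chebyshevBall]
  exact isClosed_biInter fun b _ => WeakDual.isClosed_closedBall b r

theorem isCompact_image_toWeakDual_chebyshevBall [ProperSpace 𝕜] (hB : B.Nonempty) (r : ℝ) :
    IsCompact (StrongDual.toWeakDual '' chebyshevBall B r) := by
  obtain ⟨b, hb⟩ := hB
  exact (WeakDual.isCompact_closedBall b r).of_isClosed_subset
    (isClosed_image_toWeakDual_chebyshevBall r)
    (by rw [image_toWeakDual_chebyshevBall]; exact biInter_subset_of_mem hb)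

theorem chebyshevCenter_nonempty [ProperSpace 𝕜] (hB_ne : B.Nonempty)
    (hB_bdd : Bornology.IsBounded B) : (chebyshevCenter B).Nonempty := by
  let K : Ioi (chebyshevRadius B) → Set (WeakDual 𝕜 E) :=
    fun r => StrongDual.toWeakDual '' chebyshevBall B r
  have : Nonempty (Ioi (chebyshevRadius B)) := nonempty_Ioi_subtype
  have hK : (⋂ r, K r).Nonempty :=
    IsCompact.nonempty_iInter_of_directed_nonempty_isCompact_isClosed K
      ((monotone_image.comp (chebyshevBall_mono.comp (Subtype.mono_coe _))).directed_ge)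
      (fun r => (chebyshevBall_nonempty_of_chebyshevRadius_lt hB_bdd r.2).image _)
      (fun r => isCompact_image_toWeakDual_chebyshevBall hB_ne r)
      (fun r => isClosed_image_toWeakDual_chebyshevBall r)
  rw [← image_iInter StrongDual.toWeakDual.bijective,
    ← chebyshevCenter_eq_iInter_chebyshevBall] at hK
  exact hK.of_image

end WeakDual

/-- for a nonempty bounded subset `B` of the dual `E*` of a
Banach space `E`, the Chebyshev center
`C_B = {x ∈ E* : sup_{b ∈ B} ‖x - b‖ ≤ r_B} = ⋂_{r > r_B} C_r` is nonempty,
convex and weak* compact, where `C_r = {x : sup_{b ∈ B} ‖x - b‖ ≤ r}`. -/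
theorem stmt4
    (E : Type) [NormedAddCommGroup E] [NormedSpace ℝ E]
    (B : Set (StrongDual ℝ E)) (hB_ne : B.Nonempty) (hB_bdd : Bornology.IsBounded B) :
    (chebyshevCenter B).Nonempty ∧
    Convex ℝ (chebyshevCenter B) ∧
    IsCompact ((StrongDual.toWeakDual (𝕜 := ℝ) (E := E)) '' chebyshevCenter B) ∧
    chebyshevCenter B =
      ⋂ (r : ℝ) (_ : chebyshevRadius B < r), {x : StrongDual ℝ E | ∀ b ∈ B, ‖x - b‖ ≤ r} :=
  ⟨chebyshevCenter_nonempty hB_ne hB_bdd, convex_chebyshevBall B _,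
    isCompact_image_toWeakDual_chebyshevBall hB_ne _,
    chebyshevCenter_eq_iInter_chebyshevBall.trans (iInter_subtype _ _)⟩
end

section
/- Let X be an L-embedded Banach space, so that X** = X ⊕ X_s for a closed subspace X_s of X** with ‖c + ξ‖ = ‖c‖ + ‖ξ‖ for all c ∈ X and ξ ∈ X_s (identifying X with its canonical image in X**). Let B be a nonempty bounded subset of X, and let C be the Chebyshev center of B computed in X**. Then C ⊆ X; more precisely, if x ∈ C is written as x = c + ξ with c ∈ X and ξ ∈ X_s, then ξ = 0. -/
/-!
Write a point of the Chebyshev center of `B ⊆ X` as `x = c + ξ` with `c ∈ X`, `ξ ∈ X_s`. For `b ∈ B`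
the L-decomposition gives `‖c - b‖ = ‖x - b‖ - ‖ξ‖ ≤ r_B - ‖ξ‖`, so `c` is a center of radius
`r_B - ‖ξ‖` and minimality of `r_B` forces `ξ = 0`. Since `X** = X ⊕ X_s`, this gives `x ∈ X`.
-/

open NormedSpace Set

section Chebyshev

variable {Y : Type} [NormedAddCommGroup Y]

theorem chebyshevRadius_le {B : Set Y} (hB : B.Nonempty) {y : Y} {r : ℝ}
    (hy : ∀ b ∈ B, ‖y - b‖ ≤ r) : chebyshevRadius B ≤ r := by
  obtain ⟨b, hb⟩ := hB
  exact csInf_le ⟨0, fun s hs => hs.1⟩ ⟨(norm_nonneg _).trans (hy b hb), y, hy⟩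

theorem eq_zero_of_add_mem_chebyshevCenter {M : AddSubgroup Y} {S : Set Y}
    (hnorm : ∀ m ∈ M, ∀ ξ ∈ S, ‖m + ξ‖ = ‖m‖ + ‖ξ‖) {B : Set Y} (hB : B.Nonempty)
    (hBM : B ⊆ M) {m ξ : Y} (hm : m ∈ M) (hξ : ξ ∈ S)
    (hcenter : m + ξ ∈ chebyshevCenter B) : ξ = 0 := by
  have hdist : ∀ b ∈ B, ‖m - b‖ ≤ chebyshevRadius B - ‖ξ‖ := by
    intro b hb
    have hsplit : ‖m + ξ - b‖ = ‖m - b‖ + ‖ξ‖ := by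
      rw [add_sub_right_comm, hnorm _ (M.sub_mem hm (hBM hb)) ξ hξ]
    linarith [hcenter b hb]
  have := chebyshevRadius_le hB hdist
  exact norm_le_zero_iff.mp (by linarith)

end Chebyshev

theorem stmt5_general
    (X : Type) [NormedAddCommGroup X] [NormedSpace ℝ X]
    (Xs : Submodule ℝ (StrongDual ℝ (StrongDual ℝ X)))
    (hcompl : IsCompl (LinearMap.range (inclusionInDoubleDual ℝ X).toLinearMap) Xs)
    (hnorm : ∀ (c : X), ∀ ξ ∈ Xs,
      ‖inclusionInDoubleDual ℝ X c + ξ‖ = ‖inclusionInDoubleDual ℝ X c‖ + ‖ξ‖)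
    (B : Set X) (hB_ne : B.Nonempty) :
    chebyshevCenter ((inclusionInDoubleDual ℝ X) '' B) ⊆
      Set.range (inclusionInDoubleDual ℝ X) ∧
    ∀ x ∈ chebyshevCenter ((inclusionInDoubleDual ℝ X) '' B),
      ∀ (c : X), ∀ ξ ∈ Xs, x = inclusionInDoubleDual ℝ X c + ξ → ξ = 0 := by
  set J := inclusionInDoubleDual ℝ X
  have hsingular : ∀ x ∈ chebyshevCenter (J '' B), ∀ (c : X), ∀ ξ ∈ Xs, x = J c + ξ → ξ = 0 := by
    rintro x hx c ξ hξ rfl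
    refine eq_zero_of_add_mem_chebyshevCenter (M := (LinearMap.range J.toLinearMap).toAddSubgroup)
      ?_ (hB_ne.image J) ?_ (LinearMap.mem_range_self _ c) hξ hx
    · rintro _ ⟨c', rfl⟩ ξ' hξ'
      exact hnorm c' ξ' hξ'
    · rintro _ ⟨b, -, rfl⟩
      exact ⟨b, rfl⟩
  refine ⟨fun x hx => ?_, hsingular⟩
  obtain ⟨_, ξ, ⟨c, rfl⟩, hξ, rfl⟩ :=
    Submodule.codisjoint_iff_exists_add_eq.mp hcompl.codisjoint x
  exact ⟨c, by rw [hsingular _ hx c ξ hξ rfl, add_zero]; rfl⟩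

/-- let `X` be an L-embedded Banach space, so that
`X** = X ⊕ X_s` for a closed subspace `X_s` of `X**` with
`‖c + ξ‖ = ‖c‖ + ‖ξ‖` for `c ∈ X`, `ξ ∈ X_s` (identifying `X` with its
canonical image in `X**`). If `B` is a nonempty bounded subset of `X` and
`C` is the Chebyshev center of `B` computed in `X**`, then `C ⊆ X`; more
precisely, if `x ∈ C` is written `x = c + ξ` with `c ∈ X`, `ξ ∈ X_s`, then
`ξ = 0`. -/
theorem stmt5
    (X : Type) [NormedAddCommGroup X] [NormedSpace ℝ X] [CompleteSpace X]
    (Xs : Submodule ℝ (StrongDual ℝ (StrongDual ℝ X)))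
    (hXs_closed : IsClosed (Xs : Set (StrongDual ℝ (StrongDual ℝ X))))
    (hcompl : IsCompl (LinearMap.range (inclusionInDoubleDual ℝ X).toLinearMap) Xs)
    (hnorm : ∀ (c : X), ∀ ξ ∈ Xs,
      ‖inclusionInDoubleDual ℝ X c + ξ‖ = ‖inclusionInDoubleDual ℝ X c‖ + ‖ξ‖)
    (B : Set X) (hB_ne : B.Nonempty) (hB_bdd : Bornology.IsBounded B) :
    chebyshevCenter ((inclusionInDoubleDual ℝ X) '' B) ⊆
      Set.range (inclusionInDoubleDual ℝ X) ∧
    ∀ x ∈ chebyshevCenter ((inclusionInDoubleDual ℝ X) '' B),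
      ∀ (c : X), ∀ ξ ∈ Xs, x = inclusionInDoubleDual ℝ X c + ξ → ξ = 0 :=
  stmt5_general X Xs hcompl hnorm B hB_ne
end

section
/- Let X be a Banach space, B a nonempty bounded subset of X with Chebyshev radius r_B and Chebyshev center C (both computed in X), and T : X → X a nonexpansive map such that B ⊆ cl(T(B)) (norm closure). Then T(C) ⊆ C, i.e., for every x ∈ X with sup_{b∈B} ‖x − b‖ ≤ r_B one has sup_{b∈B} ‖T(x) − b‖ ≤ r_B. -/
open Set Metric

/- A nonexpansive `T` maps `B ⊆ closedBall x r` into the closed set `closedBall (T x) r`, which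
therefore also contains `closure (T '' B) ⊇ B`. -/

theorem LipschitzWith.subset_closedBall_apply_of_subset_closure_image {α : Type*}
    [PseudoMetricSpace α] {T : α → α} (hT : LipschitzWith 1 T) {B : Set α}
    (hB : B ⊆ closure (T '' B)) {x : α} {r : ℝ} (hx : B ⊆ closedBall x r) :
    B ⊆ closedBall (T x) r := by
  have hmaps := (hT.mapsTo_closedBall x r).mono_left hx
  rw [NNReal.coe_one, one_mul] at hmaps
  exact hB.trans (isClosed_closedBall.closure_subset_iff.2 hmaps.image_subset)

theorem stmt6_general
    (X : Type) [NormedAddCommGroup X]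
    (B : Set X)
    (T : X → X) (hT : ∀ x y : X, ‖T x - T y‖ ≤ ‖x - y‖)
    (hB_inv : B ⊆ closure (T '' B)) :
    ∀ x : X, (∀ b ∈ B, ‖x - b‖ ≤ chebyshevRadius B) →
      ∀ b ∈ B, ‖T x - b‖ ≤ chebyshevRadius B := by
  intro x hx b hb
  have hT_lip : LipschitzWith 1 T := .mk_one fun y z => by simpa only [dist_eq_norm] using hT y z
  have hB : B ⊆ closedBall x (chebyshevRadius B) := fun b' hb' => by
    simpa only [mem_closedBall, dist_eq_norm'] using hx b' hb'
  simpa only [mem_closedBall, dist_eq_norm'] using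
    hT_lip.subset_closedBall_apply_of_subset_closure_image hB_inv hB hb

/-- if `B` is a nonempty bounded subset of a Banach space `X`
with Chebyshev radius `r_B` and Chebyshev center `C`, and `T : X → X` is a
nonexpansive map with `B ⊆ cl(T(B))`, then `T(C) ⊆ C`; i.e. for every `x`
with `sup_{b ∈ B} ‖x - b‖ ≤ r_B` one has `sup_{b ∈ B} ‖T x - b‖ ≤ r_B`. -/
theorem stmt6
    (X : Type) [NormedAddCommGroup X] [NormedSpace ℝ X] [CompleteSpace X]
    (B : Set X) (hB_ne : B.Nonempty) (hB_bdd : Bornology.IsBounded B)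
    (T : X → X) (hT : ∀ x y : X, ‖T x - T y‖ ≤ ‖x - y‖)
    (hB_inv : B ⊆ closure (T '' B)) :
    ∀ x : X, (∀ b ∈ B, ‖x - b‖ ≤ chebyshevRadius B) →
      ∀ b ∈ B, ‖T x - b‖ ≤ chebyshevRadius B :=
  stmt6_general X B T hT hB_inv
end
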